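/- arXiv:1302.6047 — 2 statements merged into one kernel-verified Lean document; each statement's English description precedes it below -/
import Mathlib

section
/- Let 1/2 < H < 1, let c_H := (H − 1/2) ( 2H Γ(3/2 − H) / ( Γ(H + 1/2) Γ(2 − 2H) ) )^{1/2}, write ∂_1 K_H(t,u) := c_H u^{1/2−H} (t−u)^{H−3/2} t^{H−1/2}, and set A_r := ∫_0^r e^{v/H} dv = H(e^{r/H} − 1) for r ≥ 0. Then for all real numbers 0 < s < t, ∫_0^s ∂_1 K_H(A_t, A_u) ∂_1 K_H(A_s, A_u) e^{u/H} du = H(2H−1) (A_t − A_s)^{2H−2}. -/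
open MeasureTheory Real

/-- The constant `c_H` of the Volterra kernel of fractional Brownian motion. -/
noncomputable def cH (H : ℝ) : ℝ :=
  (H - 1 / 2) * (2 * H * Gamma (3 / 2 - H) / (Gamma (H + 1 / 2) * Gamma (2 - 2 * H))) ^ ((1:ℝ) / 2)

/-- The `t`-partial derivative `∂₁K_H(t,u) = c_H u^{1/2−H} (t−u)^{H−3/2} t^{H−1/2}`
of the Volterra kernel of fractional Brownian motion. -/
noncomputable def dK (H t u : ℝ) : ℝ :=
  cH H * u ^ (1 / 2 - H) * (t - u) ^ (H - 3 / 2) * t ^ (H - 1 / 2)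

/-!
Since `A' u = e^{u/H}`, substituting `v = A u` turns the integral into
`∫_0^b ∂₁K_H(a,v) ∂₁K_H(b,v) dv` with `a = A_t`, `b = A_s`. The Möbius substitution
`v = a b w / (a - b + b w)` maps `[0,1]` onto `[0,b]` and turns this integrand into
`c_H² (a - b)^{2H-2} w^{1-2H} (1-w)^{H-3/2}`, so the integral is
`c_H² B(2 - 2H, H - 1/2) (a - b)^{2H-2}`; finally `c_H² B(2 - 2H, H - 1/2) = H(2H - 1)` by
`Γ(H + 1/2) = (H - 1/2) Γ(H - 1/2)`.
-/

open Set

theorem integral_rpow_mul_one_sub_rpow {p q : ℝ} (hp : 0 < p) (hq : 0 < q) :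
    ∫ x in (0:ℝ)..1, x ^ (p - 1) * (1 - x) ^ (q - 1) = ProbabilityTheory.beta p q := by
  apply Complex.ofReal_injective
  rw [ProbabilityTheory.beta, ← intervalIntegral.integral_ofReal]
  push_cast [← Complex.Gamma_ofReal]
  rw [← Complex.betaIntegral_eq_Gamma_mul_div _ _ (by simpa) (by simpa), Complex.betaIntegral]
  refine intervalIntegral.integral_congr fun x hx => ?_
  rw [uIcc_of_le zero_le_one] at hx
  rw [Complex.ofReal_cpow hx.1, Complex.ofReal_cpow (sub_nonneg.2 hx.2)]
  push_cast
  rfl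

theorem cH_sq_mul_beta {H : ℝ} (hH1 : 1 / 2 < H) (hH2 : H < 1) :
    cH H ^ 2 * ProbabilityTheory.beta (2 - 2 * H) (H - 1 / 2) = H * (2 * H - 1) := by
  have hΓ₁ : 0 < Gamma (3 / 2 - H) := Gamma_pos_of_pos (by linarith)
  have hΓ₂ : 0 < Gamma (2 - 2 * H) := Gamma_pos_of_pos (by linarith)
  have hΓ₃ : 0 < Gamma (H - 1 / 2) := Gamma_pos_of_pos (by linarith)
  have hH : 0 < H - 1 / 2 := by linarith
  have hΓ_succ : Gamma (H + 1 / 2) = (H - 1 / 2) * Gamma (H - 1 / 2) := by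
    rw [show H + 1 / 2 = (H - 1 / 2) + 1 by ring, Gamma_add_one hH.ne']
  rw [cH, ← sqrt_eq_rpow, mul_pow, hΓ_succ, sq_sqrt (by positivity), ProbabilityTheory.beta,
    show 2 - 2 * H + (H - 1 / 2) = 3 / 2 - H by ring]
  generalize Gamma (3 / 2 - H) = Γ₁, Gamma (2 - 2 * H) = Γ₂, Gamma (H - 1 / 2) = Γ₃ at *
  field_simp

lemma rpow_mobius_substitution_identity {p q a b c w w' D : ℝ} (ha : 0 < a) (hb : 0 < b)
    (hc : 0 < c) (hw : 0 < w) (hw' : 0 < w') (hD : 0 < D) :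
    (a * b * w / D) ^ (p - 1) * (b * c * w' / D) ^ (q - 1) * (a * c / D) ^ (-(p + q)) *
        (a * b * c / D ^ 2) =
      a ^ (-q) * b ^ (p + q - 1) * c ^ (-p) * (w ^ (p - 1) * w' ^ (q - 1)) := by
  rw [← exp_log ha, ← exp_log hb, ← exp_log hc, ← exp_log hw, ← exp_log hw', ← exp_log hD]
  simp only [← exp_add, ← exp_sub, ← exp_mul, ← exp_nat_mul, exp_eq_exp]
  push_cast
  ring

theorem integral_rpow_mul_rpow_mul_rpow_neg_add {p q a b : ℝ} (hp : 0 < p) (hq : 0 < q)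
    (hb : 0 < b) (hba : b < a) :
    ∫ v in (0:ℝ)..b, v ^ (p - 1) * (b - v) ^ (q - 1) * (a - v) ^ (-(p + q)) =
      a ^ (-q) * b ^ (p + q - 1) * (a - b) ^ (-p) * ProbabilityTheory.beta p q := by
  have ha : 0 < a := hb.trans hba
  have hc : 0 < a - b := sub_pos.2 hba
  have hD : ∀ w, 0 ≤ w → 0 < a - b + b * w := fun w hw => by positivity
  set φ : ℝ → ℝ := fun w => a * b * w / (a - b + b * w)
  have hφ : ∀ w ∈ Ioo (min 0 1) (max 0 1),
      HasDerivAt φ (a * b * (a - b) / (a - b + b * w) ^ 2) w := by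
    intro w hw
    rw [min_eq_left zero_le_one, max_eq_right zero_le_one] at hw
    exact (((hasDerivAt_id w).const_mul (a * b)).div
      (((hasDerivAt_id w).const_mul b).const_add (a - b)) (hD w hw.1.le).ne').congr_deriv
      (by simp only [id]; ring)
  have hsubst := intervalIntegral.integral_comp_mul_deriv_of_deriv_nonneg (f := φ)
    (g := fun v => v ^ (p - 1) * (b - v) ^ (q - 1) * (a - v) ^ (-(p + q)))
    (ContinuousOn.div (by fun_prop) (by fun_prop) fun w hw =>
      (hD w (uIcc_of_le (zero_le_one (α := ℝ)) ▸ hw).1).ne')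
    hφ (fun w hw => by
      rw [min_eq_left zero_le_one] at hw
      exact (div_pos (mul_pos (mul_pos ha hb) hc) (pow_pos (hD w hw.1.le) 2)).le)
  rw [show φ 0 = 0 by simp [φ], show φ 1 = b by simp [φ, ha.ne']] at hsubst
  rw [← hsubst, ← integral_rpow_mul_one_sub_rpow hp hq, ← intervalIntegral.integral_const_mul]
  refine intervalIntegral.integral_congr_Ioo_of_le zero_le_one fun w hw => ?_
  have hDw := hD w hw.1.le
  have ha_sub : a - φ w = a * (a - b) / (a - b + b * w) := by
    simp only [φ]; field_simp; ring
  have hb_sub : b - φ w = b * (a - b) * (1 - w) / (a - b + b * w) := by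
    simp only [φ]; field_simp; ring
  simp only [Function.comp_apply, ha_sub, hb_sub]
  exact rpow_mobius_substitution_identity ha hb hc hw.1 (sub_pos.2 hw.2) hDw

theorem integral_dK_mul_dK {H a b : ℝ} (hH1 : 1 / 2 < H) (hH2 : H < 1) (hb : 0 < b)
    (hba : b < a) :
    ∫ v in (0:ℝ)..b, dK H a v * dK H b v = H * (2 * H - 1) * (a - b) ^ (2 * H - 2) := by
  have ha : 0 < a := hb.trans hba
  have hpt : EqOn (fun v => dK H a v * dK H b v) (fun v => cH H ^ 2 * (a * b) ^ (H - 1 / 2) *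
      (v ^ ((2 - 2 * H) - 1) * (b - v) ^ ((H - 1 / 2) - 1) *
        (a - v) ^ (-((2 - 2 * H) + (H - 1 / 2))))) (Ioo 0 b) := by
    intro v hv
    have hv_sq : v ^ ((2 - 2 * H) - 1) = v ^ (1 / 2 - H) * v ^ (1 / 2 - H) := by
      rw [← rpow_add hv.1]; ring_nf
    simp only [dK, hv_sq, mul_rpow ha.le hb.le, show H - 1 / 2 - 1 = H - 3 / 2 by ring,
      show -((2 - 2 * H) + (H - 1 / 2)) = H - 3 / 2 by ring]
    ring
  rw [intervalIntegral.integral_congr_Ioo_of_le hb.le hpt, intervalIntegral.integral_const_mul,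
    integral_rpow_mul_rpow_mul_rpow_neg_add (by linarith) (by linarith) hb hba,
    show 2 - 2 * H + (H - 1 / 2) - 1 = -(H - 1 / 2) by ring,
    show -(2 - 2 * H) = 2 * H - 2 by ring, ← cH_sq_mul_beta hH1 hH2]
  have hab : (a * b) ^ (H - 1 / 2) * a ^ (-(H - 1 / 2)) * b ^ (-(H - 1 / 2)) = 1 := by
    rw [mul_rpow ha.le hb.le, rpow_neg ha.le, rpow_neg hb.le]
    field_simp
  linear_combination (cH H ^ 2 * ProbabilityTheory.beta (2 - 2 * H) (H - 1 / 2) *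
    (a - b) ^ (2 * H - 2)) * hab

/-- With `A_r := ∫_0^r e^{v/H} dv = H(e^{r/H} − 1)`, for `1/2 < H < 1` and `0 < s < t`,
`∫_0^s ∂₁K_H(A_t,A_u) ∂₁K_H(A_s,A_u) e^{u/H} du = H(2H−1)(A_t − A_s)^{2H−2}`. -/
theorem volterra_kernel_time_changed_integral
    (H : ℝ) (hH1 : 1 / 2 < H) (hH2 : H < 1)
    (A : ℝ → ℝ) (hA : ∀ r : ℝ, A r = H * (exp (r / H) - 1))
    (s t : ℝ) (hs : 0 < s) (hst : s < t) :
    ∫ u in (0:ℝ)..s, dK H (A t) (A u) * dK H (A s) (A u) * exp (u / H) =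
      H * (2 * H - 1) * (A t - A s) ^ (2 * H - 2) := by
  have hH : 0 < H := by linarith
  have hA_mono : StrictMono A := fun x y hxy => by
    rw [hA, hA]
    gcongr
  have hA_deriv : ∀ u, HasDerivAt A (exp (u / H)) u := fun u => by
    rw [funext hA]
    exact ((((hasDerivAt_id u).div_const H).exp.sub_const 1).const_mul H).congr_deriv
      (by simp only [id]; field_simp)
  have hA_zero : A 0 = 0 := by simp [hA]
  refine (intervalIntegral.integral_comp_mul_deriv_of_deriv_nonneg
    (g := fun v => dK H (A t) v * dK H (A s) v)
    (fun u _ => (hA_deriv u).continuousAt.continuousWithinAt) (fun u _ => hA_deriv u)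
    (fun u _ => (exp_pos _).le)).trans ?_
  rw [hA_zero]
  exact integral_dK_mul_dK hH1 hH2 (hA_zero ▸ hA_mono hs) (hA_mono hst)
end

section
/- Let 1/2 < H < 1 and θ > 1, and set A_r := ∫_0^r e^{v/H} dv = H(e^{r/H} − 1). Then lim_{T → ∞} (H(2H−1)/T) ∫_0^T ∫_0^t e^{−θ(t−u)} e^{(1/H − 1)(u + t)} (A_t − A_u)^{2H−2} du dt = (2H−1) H^{2H} B((θ−1)H + 1, 2H−1), where B denotes the Beta function. (This is the deterministic limit of the correction term I_2^{up} in the proof that the least squares estimator of the drift of the fractional Ornstein–Uhlenbeck process of the second kind is consistent.) -/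
/-!
With `z = e^{-(t-u)/H}` one has `A t - A u = H e^{t/H} (1 - z)`, and the exponential prefactors
combine so that the inner integrand is `H^{2H-2} z^{(θ-1)H+1} (1-z)^{2H-2}`, a function `k` of
`t - u` alone; the inner integral is therefore the partial integral `∫_0^t k`. The substitution
`z = e^{-s/H}` turns `∫_0^∞ k` into `H B((θ-1)H+1, 2H-1)`, and the time average `T⁻¹ ∫_0^T` of a
convergent function has the same limit (rescale to `[0, 1]` and use dominated convergence).
-/

open MeasureTheory Real Filter

/-- The complete Beta function `B(x,y) = Γ(x)Γ(y)/Γ(x+y)`. -/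
noncomputable def betaFn (x y : ℝ) : ℝ := Gamma x * Gamma y / Gamma (x + y)

open Set Topology

theorem ofReal_rpow_mul_one_sub_rpow {a b x : ℝ} (hx : x ∈ Icc (0 : ℝ) 1) :
    ((x ^ (a - 1) * (1 - x) ^ (b - 1) : ℝ) : ℂ) =
      (x : ℂ) ^ ((a : ℂ) - 1) * (1 - (x : ℂ)) ^ ((b : ℂ) - 1) := by
  push_cast [Complex.ofReal_cpow hx.1, Complex.ofReal_cpow (sub_nonneg.2 hx.2)]
  rfl

theorem integrableOn_rpow_mul_one_sub_rpow {a b : ℝ} (ha : 0 < a) (hb : 0 < b) :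
    IntegrableOn (fun x : ℝ => x ^ (a - 1) * (1 - x) ^ (b - 1)) (Ioc 0 1) := by
  have hℂ := (Complex.betaIntegral_convergent (u := a) (v := b) (by simpa) (by simpa)).1
  refine (integrableOn_congr_fun (fun x hx => ?_) measurableSet_Ioc).1 hℂ.re
  rw [← ofReal_rpow_mul_one_sub_rpow (Ioc_subset_Icc_self hx)]
  exact RCLike.ofReal_re _

theorem integral_rpow_mul_one_sub_rpow_s9 {a b : ℝ} (ha : 0 < a) (hb : 0 < b) :
    ∫ x in Ioc (0 : ℝ) 1, x ^ (a - 1) * (1 - x) ^ (b - 1) = betaFn a b := by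
  rw [show betaFn a b = ProbabilityTheory.beta a b from rfl,
    ProbabilityTheory.beta_eq_betaIntegralReal a b ha hb,
    Complex.betaIntegral, intervalIntegral.integral_of_le zero_le_one,
    ← Complex.ofReal_re (∫ x in Ioc (0 : ℝ) 1, _), ← integral_complex_ofReal]
  congr 1
  exact setIntegral_congr_fun measurableSet_Ioc fun x hx =>
    ofReal_rpow_mul_one_sub_rpow (Ioc_subset_Icc_self hx)

section ExpSubstitution

variable {c : ℝ}

theorem image_exp_neg_div_Ioi (hc : 0 < c) : (fun s => exp (-s / c)) '' Ioi 0 = Ioo 0 1 := by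
  ext z
  constructor
  · rintro ⟨s, hs, rfl⟩
    exact ⟨exp_pos _, exp_lt_one_iff.2 (div_neg_of_neg_of_pos (neg_neg_of_pos hs) hc)⟩
  · rintro ⟨hz0, hz1⟩
    refine ⟨-c * log z, mul_pos_of_neg_of_neg (neg_neg_of_pos hc) (log_neg hz0 hz1), ?_⟩
    simp [hc.ne', exp_log hz0]

theorem injOn_exp_neg_div (hc : 0 < c) : InjOn (fun s => exp (-s / c)) (Ioi 0) :=
    fun s _ t _ hst => by
  have := exp_injective hst
  field_simp at this
  linarith

theorem hasDerivAt_exp_neg_div (c s : ℝ) :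
    HasDerivAt (fun s => exp (-s / c)) (exp (-s / c) * (-1 / c)) s :=
  ((hasDerivAt_neg s).div_const c).exp

theorem abs_deriv_exp_neg_div (hc : 0 < c) (s : ℝ) :
    |exp (-s / c) * (-1 / c)| = exp (-s / c) / c := by
  rw [abs_mul, abs_of_pos (exp_pos _), abs_div, abs_neg, abs_one, abs_of_pos hc, mul_one_div]

theorem integral_Ioo_zero_one_eq_integral_exp_neg_div (hc : 0 < c) (g : ℝ → ℝ) :
    ∫ z in Ioo 0 1, g z = ∫ s in Ioi 0, exp (-s / c) / c * g (exp (-s / c)) := by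
  rw [← image_exp_neg_div_Ioi hc, integral_image_eq_integral_abs_deriv_smul measurableSet_Ioi
    (fun s _ => (hasDerivAt_exp_neg_div c s).hasDerivWithinAt) (injOn_exp_neg_div hc)]
  simp only [abs_deriv_exp_neg_div hc, smul_eq_mul]

theorem integrableOn_Ioo_zero_one_iff_exp_neg_div (hc : 0 < c) (g : ℝ → ℝ) :
    IntegrableOn g (Ioo 0 1) ↔
      IntegrableOn (fun s => exp (-s / c) / c * g (exp (-s / c))) (Ioi 0) := by
  rw [← image_exp_neg_div_Ioi hc, integrableOn_image_iff_integrableOn_abs_deriv_smul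
    measurableSet_Ioi (fun s _ => (hasDerivAt_exp_neg_div c s).hasDerivWithinAt)
    (injOn_exp_neg_div hc)]
  simp only [abs_deriv_exp_neg_div hc, smul_eq_mul]

end ExpSubstitution

noncomputable def betaKernel (c a b s : ℝ) : ℝ := exp (-s / c) ^ a * (1 - exp (-s / c)) ^ (b - 1)

section BetaKernel

variable {a b c : ℝ}

theorem div_mul_betaIntegrand_exp_neg_div (hc : 0 < c) (s : ℝ) :
    exp (-s / c) / c * (c * (exp (-s / c) ^ (a - 1) * (1 - exp (-s / c)) ^ (b - 1))) =
      betaKernel c a b s := by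
  rw [betaKernel, rpow_sub_one (exp_pos _).ne']
  field_simp

theorem integrableOn_betaKernel (hc : 0 < c) (ha : 0 < a) (hb : 0 < b) :
    IntegrableOn (betaKernel c a b) (Ioi 0) := by
  have h := (integrableOn_Ioo_zero_one_iff_exp_neg_div hc _).1
    (((integrableOn_rpow_mul_one_sub_rpow ha hb).mono_set Ioo_subset_Ioc_self).const_mul c)
  simpa only [div_mul_betaIntegrand_exp_neg_div hc] using h

theorem integral_betaKernel (hc : 0 < c) (ha : 0 < a) (hb : 0 < b) :
    ∫ s in Ioi 0, betaKernel c a b s = c * betaFn a b := by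
  rw [← integral_rpow_mul_one_sub_rpow_s9 ha hb, ← integral_const_mul, integral_Ioc_eq_integral_Ioo,
    integral_Ioo_zero_one_eq_integral_exp_neg_div hc]
  simp only [div_mul_betaIntegrand_exp_neg_div hc]

end BetaKernel

section Cesaro

variable {F : ℝ → ℝ} {L : ℝ}

theorem exists_abs_le_of_continuousOn_Icc_of_tendsto (hF : ∀ T, ContinuousOn F (Icc 0 T))
    (hlim : Tendsto F atTop (𝓝 L)) : ∃ C, ∀ t, 0 ≤ t → |F t| ≤ C := by
  obtain ⟨M, hM⟩ :=
    eventually_atTop.1 (hlim.abs.eventually (eventually_le_nhds (lt_add_one |L|)))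
  obtain ⟨C, hC⟩ := isCompact_Icc.exists_bound_of_continuousOn (hF M)
  refine ⟨max C (|L| + 1), fun t ht => ?_⟩
  rcases le_total t M with htM | hMt
  · exact (hC t ⟨ht, htM⟩).trans (le_max_left _ _)
  · exact (hM t hMt).trans (le_max_right _ _)

theorem tendsto_integral_div_of_tendsto (hF : ∀ T, ContinuousOn F (Icc 0 T))
    (hlim : Tendsto F atTop (𝓝 L)) :
    Tendsto (fun T => (∫ t in (0 : ℝ)..T, F t) / T) atTop (𝓝 L) := by
  obtain ⟨C, hC⟩ := exists_abs_le_of_continuousOn_Icc_of_tendsto hF hlim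
  have hscaled : Tendsto (fun T => ∫ x in (0 : ℝ)..1, F (T * x)) atTop
      (𝓝 (∫ _ in (0 : ℝ)..1, L)) := by
    refine intervalIntegral.tendsto_integral_filter_of_dominated_convergence (fun _ => C) ?_ ?_
      intervalIntegrable_const ?_
    · filter_upwards [eventually_ge_atTop 0] with T hT
      refine ContinuousOn.aestronglyMeasurable ?_ measurableSet_uIoc
      refine (hF T).comp (continuousOn_const.mul continuousOn_id) fun x hx => ?_
      rw [uIoc_of_le zero_le_one] at hx
      exact ⟨mul_nonneg hT hx.1.le, mul_le_of_le_one_right hT hx.2⟩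
    · filter_upwards [eventually_ge_atTop 0] with T hT
      refine ae_of_all _ fun x hx => ?_
      rw [uIoc_of_le zero_le_one] at hx
      exact hC _ (mul_nonneg hT hx.1.le)
    · refine ae_of_all _ fun x hx => ?_
      rw [uIoc_of_le zero_le_one] at hx
      exact hlim.comp (tendsto_id.atTop_mul_const hx.1)
  rw [intervalIntegral.integral_const, sub_zero, one_smul] at hscaled
  refine hscaled.congr' ?_
  filter_upwards [eventually_gt_atTop 0] with T hT
  rw [intervalIntegral.integral_comp_mul_left F hT.ne', mul_zero, mul_one, smul_eq_mul,
    inv_mul_eq_div]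

end Cesaro

theorem correction_integrand_eq {H θ t u : ℝ} (hH : 0 < H) (hut : u ≤ t) :
    exp (-θ * (t - u)) * exp ((1 / H - 1) * (u + t)) *
        (H * (exp (t / H) - 1) - H * (exp (u / H) - 1)) ^ (2 * H - 2) =
      H ^ (2 * H - 2) * betaKernel H ((θ - 1) * H + 1) (2 * H - 1) (t - u) := by
  have hshift : exp (t / H) * exp (-(t - u) / H) = exp (u / H) := by
    rw [← exp_add]; congr 1; field_simp; ring
  have hdiff : H * (exp (t / H) - 1) - H * (exp (u / H) - 1) =
      H * exp (t / H) * (1 - exp (-(t - u) / H)) := by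
    linear_combination H * hshift
  have hexp : exp (-θ * (t - u)) * exp ((1 / H - 1) * (u + t)) * exp (t / H * (2 * H - 2)) =
      exp (-(t - u) / H * ((θ - 1) * H + 1)) := by
    rw [← exp_add, ← exp_add]; congr 1; field_simp; ring
  have hz : 0 ≤ 1 - exp (-(t - u) / H) :=
    sub_nonneg.2 (exp_le_one_iff.2 (div_nonpos_of_nonpos_of_nonneg (by linarith) hH.le))
  rw [betaKernel, hdiff, mul_rpow (by positivity) hz, mul_rpow hH.le (exp_pos _).le, ← exp_mul,
    ← exp_mul, ← hexp, show 2 * H - 1 - 1 = 2 * H - 2 by ring]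
  ring

theorem integral_correction_integrand_eq {H θ t : ℝ} (hH : 0 < H) (ht : 0 ≤ t) :
    ∫ u in (0:ℝ)..t, exp (-θ * (t - u)) * exp ((1 / H - 1) * (u + t)) *
        (H * (exp (t / H) - 1) - H * (exp (u / H) - 1)) ^ (2 * H - 2) =
      H ^ (2 * H - 2) * ∫ s in (0:ℝ)..t, betaKernel H ((θ - 1) * H + 1) (2 * H - 1) s := by
  have hreflect : ∫ s in (0:ℝ)..t, betaKernel H ((θ - 1) * H + 1) (2 * H - 1) s =
      ∫ u in (0:ℝ)..t, betaKernel H ((θ - 1) * H + 1) (2 * H - 1) (t - u) := by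
    simp [intervalIntegral.integral_comp_sub_left (betaKernel _ _ _) t]
  rw [hreflect, ← intervalIntegral.integral_const_mul]
  exact intervalIntegral.integral_congr fun u hu =>
    correction_integrand_eq hH (uIcc_of_le ht ▸ hu).2

theorem continuousOn_primitive_of_integrableOn_Ioi {f : ℝ → ℝ} (hf : IntegrableOn f (Ioi 0))
    (T : ℝ) : ContinuousOn (fun t => ∫ s in (0:ℝ)..t, f s) (Icc 0 T) :=
  (intervalIntegral.continuousOn_primitive ((integrableOn_Icc_iff_integrableOn_Ioc).2
    (hf.mono_set Ioc_subset_Ioi_self))).congr fun _ ht => intervalIntegral.integral_of_le ht.1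

theorem fou2_correction_term_limit_general
    (H θ : ℝ) (hH1 : 1 / 2 < H) (hθ : 1 < θ)
    (A : ℝ → ℝ) (hA : ∀ r : ℝ, A r = H * (exp (r / H) - 1)) :
    Tendsto
      (fun T : ℝ =>
        (H * (2 * H - 1) / T) *
          ∫ t in (0:ℝ)..T, ∫ u in (0:ℝ)..t,
            exp (-θ * (t - u)) * exp ((1 / H - 1) * (u + t)) * (A t - A u) ^ (2 * H - 2))
      atTop
      (nhds ((2 * H - 1) * H ^ (2 * H) * betaFn ((θ - 1) * H + 1) (2 * H - 1))) := by
  have hH : 0 < H := by linarith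
  have ha : 0 < (θ - 1) * H + 1 := by nlinarith
  have hb : 0 < 2 * H - 1 := by linarith
  have hk := integrableOn_betaKernel hH ha hb
  have hlim : Tendsto (fun t => ∫ s in (0:ℝ)..t, betaKernel H ((θ - 1) * H + 1) (2 * H - 1) s)
      atTop (𝓝 (H * betaFn ((θ - 1) * H + 1) (2 * H - 1))) := by
    rw [← integral_betaKernel hH ha hb]
    exact intervalIntegral_tendsto_integral_Ioi 0 hk tendsto_id
  have hconst : H * (2 * H - 1) * H ^ (2 * H - 2) * (H * betaFn ((θ - 1) * H + 1) (2 * H - 1)) =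
      (2 * H - 1) * H ^ (2 * H) * betaFn ((θ - 1) * H + 1) (2 * H - 1) := by
    rw [show 2 * H = 2 * H - 2 + 2 by ring, rpow_add hH, rpow_two]
    ring_nf
  rw [← hconst]
  refine ((tendsto_integral_div_of_tendsto (continuousOn_primitive_of_integrableOn_Ioi hk)
    hlim).const_mul _).congr' ?_
  filter_upwards [eventually_ge_atTop 0] with T hT
  simp only [hA]
  rw [intervalIntegral.integral_congr fun t ht =>
      integral_correction_integrand_eq hH (uIcc_of_le hT ▸ ht).1,
    intervalIntegral.integral_const_mul]
  ring

/-- Deterministic limit of the correction term `I₂^{up}` in the consistency proof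
of the least squares estimator for the fractional Ornstein–Uhlenbeck process of the
second kind: for `1/2 < H < 1`, `θ > 1` and `A_r := ∫_0^r e^{v/H} dv = H(e^{r/H} − 1)`,
`lim_{T→∞} (H(2H−1)/T) ∫_0^T ∫_0^t e^{−θ(t−u)} e^{(1/H−1)(u+t)} (A_t − A_u)^{2H−2} du dt
  = (2H−1) H^{2H} B((θ−1)H+1, 2H−1)`. -/
theorem fou2_correction_term_limit
    (H θ : ℝ) (hH1 : 1 / 2 < H) (hH2 : H < 1) (hθ : 1 < θ)
    (A : ℝ → ℝ) (hA : ∀ r : ℝ, A r = H * (exp (r / H) - 1)) :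
    Tendsto
      (fun T : ℝ =>
        (H * (2 * H - 1) / T) *
          ∫ t in (0:ℝ)..T, ∫ u in (0:ℝ)..t,
            exp (-θ * (t - u)) * exp ((1 / H - 1) * (u + t)) * (A t - A u) ^ (2 * H - 2))
      atTop
      (nhds ((2 * H - 1) * H ^ (2 * H) * betaFn ((θ - 1) * H + 1) (2 * H - 1))) :=
  fou2_correction_term_limit_general H θ hH1 hθ A hA
end
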